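/- arXiv:1209.1901 — 5 statements merged into one kernel-verified Lean document; each statement's English description precedes it below -/
import Mathlib

section
/- Let A : [0,∞) × ℝ × ℝ → ℝ be continuous and satisfy: A(r,t,ξ)·ξ ≥ 0 for all r,t,ξ, and A(r,t,ξ) = 0 implies ξ·A(r,t,ξ) = 0 with moreover ξ ≥ 0 whenever A(r,t,ξ) ≥ 0 (sign condition: A(r,t,ξ) and ξ have the same sign). Suppose u ∈ C¹([0,∞)) satisfies (r^{N-1} A(r,u(r),u'(r)))' ≥ 0 for r > 0 with flux vanishing at 0, u ≥ 0, and inf_{r ≥ r₀} u(r) = 0 for every r₀ > 0. Then u ≡ 0. -/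
/-! Since the flux `F r = r ^ (N - 1) * A r (u r) (u' r)` is nondecreasing and tends to `0`
at `0⁺`, it is nonnegative, so by the sign condition `u' ≥ 0` on `(0, ∞)`. A nondecreasing
`u` attains its infimum over `[r₀, ∞)` at `r₀`, and that infimum is `0`; continuity gives
`u 0 = 0`. -/

open Filter Set Topology

theorem monotoneOn_Ioi_of_deriv_nonneg {f : ℝ → ℝ} {a : ℝ}
    (hf : ∀ x > a, DifferentiableAt ℝ f x) (hf' : ∀ x > a, 0 ≤ deriv f x) :
    MonotoneOn f (Ioi a) := by
  refine monotoneOn_of_deriv_nonneg (convex_Ioi a)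
    (fun x hx => (hf x hx).continuousAt.continuousWithinAt) (fun x hx => ?_) (fun x hx => ?_)
  · rw [interior_Ioi] at hx
    exact (hf x hx).differentiableWithinAt
  · rw [interior_Ioi] at hx
    exact hf' x hx

theorem MonotoneOn.le_of_tendsto_nhdsGT {f : ℝ → ℝ} {a L : ℝ} (hf : MonotoneOn f (Ioi a))
    (hL : Tendsto f (𝓝[>] a) (𝓝 L)) {x : ℝ} (hx : a < x) : L ≤ f x := by
  refine le_of_tendsto hL ?_
  filter_upwards [Ioo_mem_nhdsGT hx] with y hy
  exact hf hy.1 hx hy.2.le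

theorem MonotoneOn.csInf_image_Ici {f : ℝ → ℝ} {a : ℝ} (hf : MonotoneOn f (Ici a)) :
    sInf (f '' Ici a) = f a :=
  (hf.map_isLeast isLeast_Ici).csInf_eq

theorem stmt3_general (N : ℕ) (A : ℝ → ℝ → ℝ → ℝ)
    (hsign : ∀ r t ξ : ℝ, 0 ≤ A r t ξ → 0 ≤ ξ)
    (u : ℝ → ℝ) (hu : ContDiff ℝ 1 u)
    (hFdiff : ∀ r > (0:ℝ),
      DifferentiableAt ℝ (fun r : ℝ => r ^ (N - 1) * A r (u r) (deriv u r)) r)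
    (hmono : ∀ r > (0:ℝ),
      0 ≤ deriv (fun r : ℝ => r ^ (N - 1) * A r (u r) (deriv u r)) r)
    (h0 : Tendsto (fun r : ℝ => r ^ (N - 1) * A r (u r) (deriv u r))
      (nhdsWithin 0 (Set.Ioi 0)) (nhds 0))
    (hinf : ∀ r₀ > (0:ℝ), sInf (u '' Set.Ici r₀) = 0) :
    ∀ r : ℝ, 0 ≤ r → u r = 0 := by
  have hflux_nonneg : ∀ r > (0:ℝ), 0 ≤ r ^ (N - 1) * A r (u r) (deriv u r) :=
    fun r hr => (monotoneOn_Ioi_of_deriv_nonneg hFdiff hmono).le_of_tendsto_nhdsGT h0 hr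
  have hu_mono : MonotoneOn u (Ioi 0) :=
    monotoneOn_Ioi_of_deriv_nonneg (fun r _ => hu.differentiable one_ne_zero r)
      fun r hr => hsign r (u r) _ (nonneg_of_mul_nonneg_right (hflux_nonneg r hr) (pow_pos hr _))
  have hu_zero : EqOn u 0 (Ioi 0) := fun r (hr : 0 < r) => by
    rw [Pi.zero_apply, ← hinf r hr, (hu_mono.mono (Ici_subset_Ioi.mpr hr)).csInf_image_Ici]
  intro r hr
  exact hu_zero.closure hu.continuous continuous_const (closure_Ioi (0:ℝ) ▸ hr)

theorem stmt3 (N : ℕ) (A : ℝ → ℝ → ℝ → ℝ)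
    (hAcont : Continuous fun p : ℝ × ℝ × ℝ => A p.1 p.2.1 p.2.2)
    (hWE : ∀ r t ξ : ℝ, 0 ≤ A r t ξ * ξ)
    (hsign : ∀ r t ξ : ℝ, 0 ≤ A r t ξ → 0 ≤ ξ)
    (u : ℝ → ℝ) (hu : ContDiff ℝ 1 u)
    (hFdiff : ∀ r > (0:ℝ),
      DifferentiableAt ℝ (fun r : ℝ => r ^ (N - 1) * A r (u r) (deriv u r)) r)
    (hmono : ∀ r > (0:ℝ),
      0 ≤ deriv (fun r : ℝ => r ^ (N - 1) * A r (u r) (deriv u r)) r)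
    (h0 : Tendsto (fun r : ℝ => r ^ (N - 1) * A r (u r) (deriv u r))
      (nhdsWithin 0 (Set.Ioi 0)) (nhds 0))
    (hupos : ∀ r : ℝ, 0 ≤ r → 0 ≤ u r)
    (hinf : ∀ r₀ > (0:ℝ), sInf (u '' Set.Ici r₀) = 0) :
    ∀ r : ℝ, 0 ≤ r → u r = 0 :=
  stmt3_general N A hsign u hu hFdiff hmono h0 hinf
end

section
/- The map ξ ↦ ξ/√(1+|ξ|²) from ℝ^N to ℝ^N is W-p-C for every p with 1 ≤ p ≤ 2: it satisfies A(ξ)·ξ ≥ 0, A(0) = 0, and there exists k > 0 such that (A(ξ)·ξ)^{p-1} ≥ k^{p-1}|A(ξ)|^p for all ξ ∈ ℝ^N. -/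
/-!
Write `A ξ = ξ / √(1 + |ξ|²)`. Since `A ξ` is a nonnegative multiple of `ξ`, `A ξ · ξ = |A ξ| |ξ|`,
and `|A ξ| ≤ min 1 |ξ| ≤ |ξ| ^ (p - 1)` because `0 ≤ p - 1 ≤ 1`. Hence
`|A ξ| ^ p = |A ξ| ^ (p - 1) |A ξ| ≤ (|A ξ| |ξ|) ^ (p - 1) = (A ξ · ξ) ^ (p - 1)`, i.e. `k = 1` works.
-/

open Real

variable {E : Type*} [NormedAddCommGroup E] [InnerProductSpace ℝ E]

def IsWeaklyPCoercive (p : ℝ) (A : E → E) : Prop :=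
  (∀ ξ, 0 ≤ inner ℝ (A ξ) ξ) ∧ A 0 = 0 ∧
    ∃ k > (0 : ℝ), ∀ ξ, k ^ (p - 1) * ‖A ξ‖ ^ p ≤ inner ℝ (A ξ) ξ ^ (p - 1)

noncomputable def meanCurvatureField (ξ : E) : E :=
  (√(1 + ‖ξ‖ ^ 2))⁻¹ • ξ

lemma le_rpow_of_le_one_of_le {a t q : ℝ} (ha : 0 ≤ a) (ha1 : a ≤ 1) (hat : a ≤ t)
    (hq0 : 0 ≤ q) (hq1 : q ≤ 1) : a ≤ t ^ q := by
  rcases le_total t 1 with ht1 | ht1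
  · exact hat.trans (self_le_rpow_of_le_one (ha.trans hat) ht1 hq1)
  · exact ha1.trans (one_le_rpow ht1 hq0)

theorem isWeaklyPCoercive_of_inner_eq_norm_mul_norm {A : E → E} {p : ℝ} (hp1 : 1 ≤ p)
    (hp2 : p ≤ 2) (hinner : ∀ ξ, inner ℝ (A ξ) ξ = ‖A ξ‖ * ‖ξ‖) (hle_one : ∀ ξ, ‖A ξ‖ ≤ 1)
    (hle_norm : ∀ ξ, ‖A ξ‖ ≤ ‖ξ‖) : IsWeaklyPCoercive p A := by
  refine ⟨fun ξ => hinner ξ ▸ by positivity, norm_le_zero_iff.mp (by simpa using hle_norm 0),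
    1, one_pos, fun ξ => ?_⟩
  have hA : ‖A ξ‖ ≤ ‖ξ‖ ^ (p - 1) :=
    le_rpow_of_le_one_of_le (norm_nonneg _) (hle_one ξ) (hle_norm ξ) (by linarith) (by linarith)
  calc 1 ^ (p - 1) * ‖A ξ‖ ^ p = ‖A ξ‖ ^ (p - 1) * ‖A ξ‖ := by
        rw [one_rpow, one_mul, ← rpow_add_one' (norm_nonneg _) (by linarith), sub_add_cancel]
    _ ≤ ‖A ξ‖ ^ (p - 1) * ‖ξ‖ ^ (p - 1) := by gcongr
    _ = inner ℝ (A ξ) ξ ^ (p - 1) := by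
        rw [hinner, mul_rpow (norm_nonneg _) (norm_nonneg _)]

lemma norm_meanCurvatureField (ξ : E) : ‖meanCurvatureField ξ‖ = ‖ξ‖ / √(1 + ‖ξ‖ ^ 2) := by
  rw [meanCurvatureField, norm_smul, norm_inv, norm_of_nonneg (sqrt_nonneg _), inv_mul_eq_div]

lemma inner_meanCurvatureField_self (ξ : E) :
    inner ℝ (meanCurvatureField ξ) ξ = ‖meanCurvatureField ξ‖ * ‖ξ‖ := by
  rw [norm_meanCurvatureField, meanCurvatureField, real_inner_smul_left,
    real_inner_self_eq_norm_sq]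
  ring

lemma norm_meanCurvatureField_le_one (ξ : E) : ‖meanCurvatureField ξ‖ ≤ 1 := by
  rw [norm_meanCurvatureField]
  refine div_le_one_of_le₀ ((le_sqrt (norm_nonneg _) (by positivity)).mpr ?_) (sqrt_nonneg _)
  linarith

lemma norm_meanCurvatureField_le_norm (ξ : E) : ‖meanCurvatureField ξ‖ ≤ ‖ξ‖ := by
  rw [norm_meanCurvatureField]
  exact div_le_self (norm_nonneg _) (one_le_sqrt.mpr (by nlinarith [norm_nonneg ξ]))

theorem isWeaklyPCoercive_meanCurvatureField {p : ℝ} (hp1 : 1 ≤ p) (hp2 : p ≤ 2) :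
    IsWeaklyPCoercive p (meanCurvatureField : E → E) :=
  isWeaklyPCoercive_of_inner_eq_norm_mul_norm hp1 hp2 inner_meanCurvatureField_self
    norm_meanCurvatureField_le_one norm_meanCurvatureField_le_norm

theorem stmt5 (N : ℕ) (p : ℝ) (hp1 : 1 ≤ p) (hp2 : p ≤ 2) :
    (∀ ξ : EuclideanSpace ℝ (Fin N),
        0 ≤ (inner ℝ ((Real.sqrt (1 + ‖ξ‖ ^ 2))⁻¹ • ξ) ξ : ℝ)) ∧
    ((Real.sqrt (1 + ‖(0 : EuclideanSpace ℝ (Fin N))‖ ^ 2))⁻¹ •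
        (0 : EuclideanSpace ℝ (Fin N)) = 0) ∧
    (∃ k > (0:ℝ), ∀ ξ : EuclideanSpace ℝ (Fin N),
        k ^ (p - 1) * ‖(Real.sqrt (1 + ‖ξ‖ ^ 2))⁻¹ • ξ‖ ^ p ≤
          (inner ℝ ((Real.sqrt (1 + ‖ξ‖ ^ 2))⁻¹ • ξ) ξ : ℝ) ^ (p - 1)) :=
  isWeaklyPCoercive_meanCurvatureField hp1 hp2
end

section
/- Let m > 1 and p satisfy m ≥ p ≥ m/2 and p ≥ 1. Then the map A(ξ) := |ξ|^{m-2} ξ / √(1+|ξ|^m) on ℝ^N is W-p-C: A(ξ)·ξ ≥ 0, A(0) = 0, and there is a constant k > 0 with (A(ξ)·ξ)^{p-1} ≥ k^{p-1}|A(ξ)|^p for all ξ. -/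
/-!
With `t = |ξ|` and `s = √(1 + t^m)` one has `A(ξ)·ξ = t^m / s` and `|A(ξ)| = t^{m-1} / s`, so for
`k = 1` the inequality reduces to `t^{m-p} ≤ s`, which holds because `0 ≤ 2(m - p) ≤ m`:
`t^{2(m-p)}` is at most `1` for `t ≤ 1` and at most `t^m` for `t ≥ 1`.
-/

/-- The scalar factor of `A(ξ) = |ξ|^{m-2} ξ / √(1 + |ξ|^m)`, as a function of `t = |ξ|`. -/
noncomputable def meanCurvatureWeight (m t : ℝ) : ℝ := t ^ (m - 2) / √(1 + t ^ m)

lemma meanCurvatureWeight_nonneg (m : ℝ) {t : ℝ} (ht : 0 ≤ t) : 0 ≤ meanCurvatureWeight m t := by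
  unfold meanCurvatureWeight
  positivity

lemma rpow_le_sqrt_one_add_rpow {a b t : ℝ} (ha : 0 ≤ a) (hab : 2 * a ≤ b) (ht : 0 ≤ t) :
    t ^ a ≤ √(1 + t ^ b) := by
  apply Real.le_sqrt_of_sq_le
  rw [← Real.rpow_natCast, ← Real.rpow_mul ht, Nat.cast_ofNat, mul_comm]
  rcases le_total t 1 with h1 | h1
  · linarith [Real.rpow_le_one ht h1 (by linarith : 0 ≤ 2 * a), Real.rpow_nonneg ht b]
  · linarith [Real.rpow_le_rpow_of_exponent_le h1 hab]

lemma mul_rpow_le_mul_sq_rpow_sub_one {c t p : ℝ} (hc : 0 < c) (ht : 0 < t)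
    (h : c ≤ t ^ (p - 2)) : (c * t) ^ p ≤ (c * t ^ 2) ^ (p - 1) := by
  have hc_pow : c ^ p = c ^ (p - 1) * c := by
    rw [Real.rpow_sub_one hc.ne', div_mul_cancel₀ _ hc.ne']
  have ht_pow : t ^ (p - 2) * t ^ p = (t ^ 2) ^ (p - 1) := by
    rw [← Real.rpow_add ht, ← Real.rpow_natCast, ← Real.rpow_mul ht.le]
    norm_num
    ring_nf
  calc (c * t) ^ p = c ^ (p - 1) * (c * t ^ p) := by
        rw [Real.mul_rpow hc.le ht.le, hc_pow, mul_assoc]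
    _ ≤ c ^ (p - 1) * (t ^ (p - 2) * t ^ p) := by gcongr
    _ = (c * t ^ 2) ^ (p - 1) := by
        rw [ht_pow, Real.mul_rpow hc.le (by positivity)]

lemma meanCurvatureWeight_le_rpow {m p t : ℝ} (hpm : p ≤ m) (hmp : m / 2 ≤ p) (ht : 0 < t) :
    meanCurvatureWeight m t ≤ t ^ (p - 2) := by
  have hs : 0 < √(1 + t ^ m) := Real.sqrt_pos.2 (by positivity)
  rw [meanCurvatureWeight, div_le_iff₀ hs, show m - 2 = (m - p) + (p - 2) by ring,
    Real.rpow_add ht, mul_comm]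
  gcongr
  exact rpow_le_sqrt_one_add_rpow (by linarith) (by linarith) ht.le

lemma meanCurvatureWeight_mul_rpow_le {m p t : ℝ} (hp : p ≠ 0) (hpm : p ≤ m) (hmp : m / 2 ≤ p)
    (ht : 0 ≤ t) :
    (meanCurvatureWeight m t * t) ^ p ≤ (meanCurvatureWeight m t * t ^ 2) ^ (p - 1) := by
  rcases ht.eq_or_lt with rfl | ht
  · rw [mul_zero, Real.zero_rpow hp]
    exact Real.rpow_nonneg (by simp) _
  · refine mul_rpow_le_mul_sq_rpow_sub_one ?_ ht (meanCurvatureWeight_le_rpow hpm hmp ht)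
    unfold meanCurvatureWeight
    have := Real.rpow_pos_of_pos ht m
    positivity

theorem stmt7_general (N : ℕ) (m p : ℝ) (hp1 : 1 ≤ p)
    (hpm : p ≤ m) (hmp : m / 2 ≤ p) :
    (∀ ξ : EuclideanSpace ℝ (Fin N),
        0 ≤ (inner ℝ ((‖ξ‖ ^ (m - 2) / Real.sqrt (1 + ‖ξ‖ ^ m)) • ξ) ξ : ℝ)) ∧
    ((‖(0 : EuclideanSpace ℝ (Fin N))‖ ^ (m - 2) /
        Real.sqrt (1 + ‖(0 : EuclideanSpace ℝ (Fin N))‖ ^ m)) •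
        (0 : EuclideanSpace ℝ (Fin N)) = 0) ∧
    (∃ k > (0:ℝ), ∀ ξ : EuclideanSpace ℝ (Fin N),
        k ^ (p - 1) * ‖(‖ξ‖ ^ (m - 2) / Real.sqrt (1 + ‖ξ‖ ^ m)) • ξ‖ ^ p ≤
          (inner ℝ ((‖ξ‖ ^ (m - 2) / Real.sqrt (1 + ‖ξ‖ ^ m)) • ξ) ξ : ℝ) ^ (p - 1)) := by
  have hA (ξ : EuclideanSpace ℝ (Fin N)) :
      ‖ξ‖ ^ (m - 2) / √(1 + ‖ξ‖ ^ m) = meanCurvatureWeight m ‖ξ‖ := rfl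
  simp only [hA]
  refine ⟨fun ξ => ?_, smul_zero _, 1, one_pos, fun ξ => ?_⟩
  · rw [real_inner_smul_left, real_inner_self_eq_norm_sq]
    exact mul_nonneg (meanCurvatureWeight_nonneg m (norm_nonneg ξ)) (sq_nonneg _)
  · rw [Real.one_rpow, one_mul, real_inner_smul_left, real_inner_self_eq_norm_sq, norm_smul,
      Real.norm_of_nonneg (meanCurvatureWeight_nonneg m (norm_nonneg ξ))]
    exact meanCurvatureWeight_mul_rpow_le (by linarith) hpm hmp (norm_nonneg ξ)

theorem stmt7 (N : ℕ) (m p : ℝ) (hm : 1 < m) (hp1 : 1 ≤ p)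
    (hpm : p ≤ m) (hmp : m / 2 ≤ p) :
    (∀ ξ : EuclideanSpace ℝ (Fin N),
        0 ≤ (inner ℝ ((‖ξ‖ ^ (m - 2) / Real.sqrt (1 + ‖ξ‖ ^ m)) • ξ) ξ : ℝ)) ∧
    ((‖(0 : EuclideanSpace ℝ (Fin N))‖ ^ (m - 2) /
        Real.sqrt (1 + ‖(0 : EuclideanSpace ℝ (Fin N))‖ ^ m)) •
        (0 : EuclideanSpace ℝ (Fin N)) = 0) ∧
    (∃ k > (0:ℝ), ∀ ξ : EuclideanSpace ℝ (Fin N),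
        k ^ (p - 1) * ‖(‖ξ‖ ^ (m - 2) / Real.sqrt (1 + ‖ξ‖ ^ m)) • ξ‖ ^ p ≤
          (inner ℝ ((‖ξ‖ ^ (m - 2) / Real.sqrt (1 + ‖ξ‖ ^ m)) • ξ) ξ : ℝ) ^ (p - 1)) :=
  stmt7_general N m p hp1 hpm hmp
end

section
/- For 1 < p ≤ 2 there exists a constant k > 0 such that for all ξ, η ∈ ℝ^N, ((A(ξ) − A(η))·(ξ − η))^{p-1} ≥ k^{p-1} |A(ξ) − A(η)|^p, where A(ξ) = ξ/√(1+|ξ|²). -/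
/-!
Write `A ξ = φ(|ξ|) ξ` with `φ t = (1 + t²)^(-1/2) ∈ (0, 1]`; both `t φ(t) = |A ξ|` and
`t (1 - φ(t)) = |ξ| - |A ξ|` are nondecreasing in `t ≥ 0`. Expanding and using Cauchy–Schwarz,
`⟨A ξ - A η, ξ - η⟩ - |A ξ - A η|² ≥ (|A ξ| - |A η|) ((|ξ| - |A ξ|) - (|η| - |A η|)) ≥ 0`,
so `A` is firmly nonexpansive. Since `|A| ≤ 1`, `t = |A ξ - A η| ≤ 2`, hence
`2^(p-2) t^p ≤ t^(2(p-1)) ≤ ⟨A ξ - A η, ξ - η⟩^(p-1)`, and `k = 2^((p-2)/(p-1))` works.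
-/

open Real Set
open scoped RealInnerProductSpace

lemma inv_sqrt_one_add_sq_mem_Icc (t : ℝ) : (√(1 + t ^ 2))⁻¹ ∈ Icc (0:ℝ) 1 :=
  ⟨by positivity, inv_le_one_of_one_le₀ (one_le_sqrt.2 (by nlinarith [sq_nonneg t]))⟩

lemma antitoneOn_inv_sqrt_one_add_sq : AntitoneOn (fun t : ℝ => (√(1 + t ^ 2))⁻¹) (Ici 0) :=
  fun s hs t _ hst => inv_anti₀ (by positivity) (sqrt_le_sqrt (by gcongr))

lemma monotoneOn_inv_sqrt_one_add_sq_mul :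
    MonotoneOn (fun t : ℝ => (√(1 + t ^ 2))⁻¹ * t) (Ici 0) := by
  intro s hs t ht hst
  rw [mem_Ici] at hs ht
  simp only [inv_mul_eq_div]
  rw [div_le_div_iff₀ (by positivity) (by positivity),
    ← pow_le_pow_iff_left₀ (by positivity) (by positivity) two_ne_zero, mul_pow, mul_pow,
    sq_sqrt (by positivity), sq_sqrt (by positivity)]
  nlinarith [mul_le_mul hst hst hs (le_trans hs hst)]

lemma monotoneOn_one_sub_inv_sqrt_one_add_sq_mul :
    MonotoneOn (fun t : ℝ => (1 - (√(1 + t ^ 2))⁻¹) * t) (Ici 0) :=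
  MonotoneOn.mul
    (fun _ hs _ ht hst => sub_le_sub_left (antitoneOn_inv_sqrt_one_add_sq hs ht hst) 1)
    monotoneOn_id (fun t _ => sub_nonneg.2 (inv_sqrt_one_add_sq_mem_Icc t).2) fun _ ht => ht

lemma inv_sqrt_one_add_sq_mul_le_one (t : ℝ) : (√(1 + t ^ 2))⁻¹ * t ≤ 1 := by
  rw [inv_mul_le_iff₀ (by positivity), mul_one]
  calc t ≤ √(t ^ 2) := by rw [sqrt_sq_eq_abs]; exact le_abs_self t
    _ ≤ √(1 + t ^ 2) := sqrt_le_sqrt (by linarith)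

section Radial

variable {E : Type*} [NormedAddCommGroup E] [InnerProductSpace ℝ E]

lemma norm_sq_sub_smul_le_inner_sub_smul {a b : ℝ} (ha : a ∈ Icc (0:ℝ) 1) (hb : b ∈ Icc (0:ℝ) 1)
    (x y : E) (hprod : 0 ≤ (a * ‖x‖ - b * ‖y‖) * ((1 - a) * ‖x‖ - (1 - b) * ‖y‖)) :
    ‖a • x - b • y‖ ^ 2 ≤ ⟪a • x - b • y, x - y⟫ := by
  have hcs : ⟪x, y⟫ ≤ ‖x‖ * ‖y‖ := real_inner_le_norm x y
  have hcoef : 0 ≤ a * (1 - b) + b * (1 - a) := by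
    obtain ⟨ha0, ha1⟩ := ha; obtain ⟨hb0, hb1⟩ := hb
    positivity [sub_nonneg.2 ha1, sub_nonneg.2 hb1]
  have hinner : ⟪a • x - b • y, x - y⟫ = a * ‖x‖ ^ 2 + b * ‖y‖ ^ 2 - (a + b) * ⟪x, y⟫ := by
    simp only [inner_sub_left, inner_sub_right, real_inner_smul_left,
      real_inner_self_eq_norm_sq, real_inner_comm x y]
    ring
  have hnorm : ‖a • x - b • y‖ ^ 2 = a ^ 2 * ‖x‖ ^ 2 + b ^ 2 * ‖y‖ ^ 2 - 2 * a * b * ⟪x, y⟫ := by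
    rw [norm_sub_sq_real, norm_smul, norm_smul, real_inner_smul_left, real_inner_smul_right,
      norm_eq_abs, norm_eq_abs, abs_of_nonneg ha.1, abs_of_nonneg hb.1]
    ring
  rw [hinner, hnorm]
  nlinarith [mul_le_mul_of_nonneg_left hcs hcoef]

lemma norm_sq_sub_radial_le_inner {φ : ℝ → ℝ} (hφ : ∀ t, 0 ≤ t → φ t ∈ Icc (0:ℝ) 1)
    (hmono : MonotoneOn (fun t => φ t * t) (Ici 0))
    (hmono' : MonotoneOn (fun t => (1 - φ t) * t) (Ici 0)) (x y : E) :
    ‖φ ‖x‖ • x - φ ‖y‖ • y‖ ^ 2 ≤ ⟪φ ‖x‖ • x - φ ‖y‖ • y, x - y⟫ :=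
  norm_sq_sub_smul_le_inner_sub_smul (hφ _ (norm_nonneg x)) (hφ _ (norm_nonneg y)) x y
    ((hmono.monovaryOn hmono').sub_mul_sub_nonneg (norm_nonneg y) (norm_nonneg x))

lemma norm_inv_sqrt_one_add_sq_smul_le_one (x : E) : ‖(√(1 + ‖x‖ ^ 2))⁻¹ • x‖ ≤ 1 := by
  rw [norm_smul, norm_of_nonneg (inv_sqrt_one_add_sq_mem_Icc _).1]
  exact inv_sqrt_one_add_sq_mul_le_one _

end Radial

lemma rpow_mul_rpow_le_rpow_of_sq_le {p M t s : ℝ} (hp1 : 1 ≤ p) (hp2 : p ≤ 2) (ht : 0 ≤ t)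
    (htM : t ≤ M) (hts : t ^ 2 ≤ s) : M ^ (p - 2) * t ^ p ≤ s ^ (p - 1) := by
  have hs : 0 ≤ s := le_trans (sq_nonneg t) hts
  rcases ht.eq_or_lt with rfl | ht
  · rw [zero_rpow (by linarith), mul_zero]
    exact rpow_nonneg hs _
  calc M ^ (p - 2) * t ^ p ≤ t ^ (p - 2) * t ^ p :=
        mul_le_mul_of_nonneg_right (rpow_le_rpow_of_nonpos ht htM (by linarith))
          (rpow_nonneg ht.le p)
    _ = (t ^ 2) ^ (p - 1) := by
        rw [← rpow_add ht, ← rpow_natCast, ← rpow_mul ht.le]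
        congr 1; push_cast; ring
    _ ≤ s ^ (p - 1) := by gcongr

theorem stmt11 (N : ℕ) (p : ℝ) (hp1 : 1 < p) (hp2 : p ≤ 2) :
    ∃ k > (0:ℝ), ∀ ξ η : EuclideanSpace ℝ (Fin N),
      k ^ (p - 1) *
          ‖(Real.sqrt (1 + ‖ξ‖ ^ 2))⁻¹ • ξ - (Real.sqrt (1 + ‖η‖ ^ 2))⁻¹ • η‖ ^ p ≤
        (inner ℝ ((Real.sqrt (1 + ‖ξ‖ ^ 2))⁻¹ • ξ - (Real.sqrt (1 + ‖η‖ ^ 2))⁻¹ • η)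
          (ξ - η) : ℝ) ^ (p - 1) := by
  refine ⟨2 ^ ((p - 2) / (p - 1)), by positivity, fun ξ η => ?_⟩
  rw [← rpow_mul zero_le_two, div_mul_cancel₀ _ (sub_ne_zero.2 hp1.ne')]
  have hbound : ‖(√(1 + ‖ξ‖ ^ 2))⁻¹ • ξ - (√(1 + ‖η‖ ^ 2))⁻¹ • η‖ ≤ 2 :=
    calc _ ≤ ‖(√(1 + ‖ξ‖ ^ 2))⁻¹ • ξ‖ + ‖(√(1 + ‖η‖ ^ 2))⁻¹ • η‖ := norm_sub_le _ _
      _ ≤ 1 + 1 := add_le_add (norm_inv_sqrt_one_add_sq_smul_le_one ξ)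
          (norm_inv_sqrt_one_add_sq_smul_le_one η)
      _ = 2 := one_add_one_eq_two
  exact rpow_mul_rpow_le_rpow_of_sq_le hp1.le hp2 (norm_nonneg _) hbound
    (norm_sq_sub_radial_le_inner (fun t _ => inv_sqrt_one_add_sq_mem_Icc t)
      monotoneOn_inv_sqrt_one_add_sq_mul monotoneOn_one_sub_inv_sqrt_one_add_sq_mul ξ η)
end

section
/- Let N ≥ 1, α > 0, and on the half-space Ω = {x ∈ ℝ^N : x₁ > 0} define u(x) = x₁^{−a} and v(x) = x₁^{−b}, where a = (p₂q₂+p₁(p₂−1))/(q₁q₂−(p₁−1)(p₂−1)) and b = (p₁q₁+p₂(p₁−1))/(q₁q₂−(p₁−1)(p₂−1)), with p₁, p₂ > 1, q₁ > p₁−1, q₂ > p₂−1. Then there exist constants λ, μ > 0 such that Δ_{p₁} u = λ v^{q₂} and Δ_{p₂} v = μ u^{q₁} pointwise on Ω. -/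
/-!
Since `u` and `v` depend on `x₁` only, `Δ_p` acts on them as the one-dimensional operator
`w ↦ (|w'|^{p-2} w')'`, which maps `t ^ (-a)` to a positive multiple of `t ^ (-((a+1)(p-1)+1))`.
The exponents `a`, `b` are the solution of the linear system `(a+1)(p₁-1)+1 = b q₂`,
`(b+1)(p₂-1)+1 = a q₁`, whose determinant `q₁q₂ - (p₁-1)(p₂-1)` is positive.
-/

open Real Filter Topology

variable {ι : Type*} [Fintype ι] [DecidableEq ι]

noncomputable def divergence (F : EuclideanSpace ℝ ι → EuclideanSpace ℝ ι)
    (x : EuclideanSpace ℝ ι) : ℝ :=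
  ∑ j, fderiv ℝ F x (EuclideanSpace.single j 1) j

noncomputable def pLaplacian (p : ℝ) (f : EuclideanSpace ℝ ι → ℝ) : EuclideanSpace ℝ ι → ℝ :=
  divergence fun y => ‖gradient f y‖ ^ (p - 2) • gradient f y

theorem Filter.EventuallyEq.divergence_eq {F G : EuclideanSpace ℝ ι → EuclideanSpace ℝ ι}
    {x : EuclideanSpace ℝ ι} (h : F =ᶠ[𝓝 x] G) : divergence F x = divergence G x := by
  simp only [divergence, h.fderiv_eq]

theorem divergence_smul_single_comp_coord {h : ℝ → ℝ} {h' : ℝ} (i : ι) {x : EuclideanSpace ℝ ι}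
    (hh : HasDerivAt h h' (x i)) :
    divergence (fun y : EuclideanSpace ℝ ι => h (y i) • EuclideanSpace.single i (1 : ℝ)) x = h' := by
  have hd : HasFDerivAt
      (fun y : EuclideanSpace ℝ ι => h (y i) • EuclideanSpace.single i (1 : ℝ)) _ x :=
    (hh.hasFDerivAt.comp x (EuclideanSpace.proj (𝕜 := ℝ) i).hasFDerivAt).smul_const _
  rw [divergence, hd.fderiv, Finset.sum_eq_single i (fun j _ hj => by simp [hj]) (by simp)]
  simp

theorem hasGradientAt_comp_coord {g : ℝ → ℝ} {g' : ℝ} (i : ι) {x : EuclideanSpace ℝ ι}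
    (hg : HasDerivAt g g' (x i)) :
    HasGradientAt (fun z : EuclideanSpace ℝ ι => g (z i)) (g' • EuclideanSpace.single i 1) x := by
  rw [hasGradientAt_iff_hasFDerivAt]
  refine (hg.hasFDerivAt.comp x (EuclideanSpace.proj (𝕜 := ℝ) i).hasFDerivAt).congr_fderiv ?_
  ext v
  simp [EuclideanSpace.inner_single_left, mul_comm]

theorem pLaplacian_comp_coord (p : ℝ) {g g' : ℝ → ℝ} {h' : ℝ} (i : ι) {x : EuclideanSpace ℝ ι}
    (hg : ∀ᶠ t in 𝓝 (x i), HasDerivAt g (g' t) t)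
    (hflux : HasDerivAt (fun t => |g' t| ^ (p - 2) * g' t) h' (x i)) :
    pLaplacian p (fun z => g (z i)) x = h' := by
  have hcoord : Tendsto (fun y : EuclideanSpace ℝ ι => y i) (𝓝 x) (𝓝 (x i)) :=
    (EuclideanSpace.proj (𝕜 := ℝ) i).continuous.continuousAt
  have hflux_eq : (fun y => ‖gradient (fun z : EuclideanSpace ℝ ι => g (z i)) y‖ ^ (p - 2) •
        gradient (fun z : EuclideanSpace ℝ ι => g (z i)) y)
      =ᶠ[𝓝 x] fun y => (|g' (y i)| ^ (p - 2) * g' (y i)) • EuclideanSpace.single i (1 : ℝ) := by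
    filter_upwards [hcoord.eventually hg] with y hy
    rw [(hasGradientAt_comp_coord i hy).gradient, norm_smul, PiLp.norm_single, norm_one,
      mul_one, Real.norm_eq_abs, smul_smul]
  rw [pLaplacian, hflux_eq.divergence_eq]
  exact divergence_smul_single_comp_coord i hflux

theorem pLaplacian_rpow_neg_coord (p : ℝ) {a : ℝ} (ha : 0 < a) (i : ι) {x : EuclideanSpace ℝ ι}
    (hx : 0 < x i) :
    pLaplacian p (fun z => z i ^ (-a)) x
      = a ^ (p - 1) * ((a + 1) * (p - 1)) * x i ^ (-((a + 1) * (p - 1) + 1)) := by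
  have hpos : ∀ᶠ t in 𝓝 (x i), 0 < t := lt_mem_nhds hx
  have hg : ∀ᶠ t in 𝓝 (x i), HasDerivAt (fun t => t ^ (-a)) (-a * t ^ (-a - 1)) t := by
    filter_upwards [hpos] with t ht
    exact hasDerivAt_rpow_const (Or.inl ht.ne')
  have hflux_eq : (fun t => |-a * t ^ (-a - 1)| ^ (p - 2) * (-a * t ^ (-a - 1)))
      =ᶠ[𝓝 (x i)] fun t => -a ^ (p - 1) * t ^ ((-a - 1) * (p - 1)) := by
    filter_upwards [hpos] with t ht
    have hts : 0 < t ^ (-a - 1) := rpow_pos_of_pos ht _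
    have hpow : ∀ c : ℝ, 0 < c → c ^ (p - 1) = c ^ (p - 2) * c := fun c hc => by
      rw [← rpow_add_one hc.ne']
      ring_nf
    rw [abs_mul, abs_neg, abs_of_pos ha, abs_of_pos hts, mul_rpow ha.le hts.le, rpow_mul ht.le,
      hpow a ha, hpow _ hts]
    ring
  have hflux := ((hasDerivAt_rpow_const (p := (-a - 1) * (p - 1)) (Or.inl hx.ne')).const_mul
    (-a ^ (p - 1))).congr_of_eventuallyEq hflux_eq
  rw [pLaplacian_comp_coord p i hg hflux,
    show (-a - 1) * (p - 1) - 1 = -((a + 1) * (p - 1) + 1) by ring]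
  ring

theorem exponent_balance {p₁ p₂ q₁ q₂ : ℝ} (hD : q₁ * q₂ - (p₁ - 1) * (p₂ - 1) ≠ 0) :
    ((p₂ * q₂ + p₁ * (p₂ - 1)) / (q₁ * q₂ - (p₁ - 1) * (p₂ - 1)) + 1) * (p₁ - 1) + 1 =
      (p₁ * q₁ + p₂ * (p₁ - 1)) / (q₁ * q₂ - (p₁ - 1) * (p₂ - 1)) * q₂ := by
  rw [div_add_one hD, div_mul_eq_mul_div, div_mul_eq_mul_div, div_add_one hD, div_left_inj' hD]
  ring

theorem stmt16 (N : ℕ) (hN : 0 < N) (p₁ p₂ q₁ q₂ a b : ℝ)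
    (hp₁ : 1 < p₁) (hp₂ : 1 < p₂) (hq₁ : p₁ - 1 < q₁) (hq₂ : p₂ - 1 < q₂)
    (ha : a = (p₂ * q₂ + p₁ * (p₂ - 1)) / (q₁ * q₂ - (p₁ - 1) * (p₂ - 1)))
    (hb : b = (p₁ * q₁ + p₂ * (p₁ - 1)) / (q₁ * q₂ - (p₁ - 1) * (p₂ - 1))) :
    ∃ lam > (0:ℝ), ∃ mu > (0:ℝ),
      ∀ x : EuclideanSpace ℝ (Fin N), 0 < x ⟨0, hN⟩ →
        (∑ i : Fin N,
          (fderiv ℝ (fun y : EuclideanSpace ℝ (Fin N) =>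
              (‖gradient (fun z : EuclideanSpace ℝ (Fin N) => z ⟨0, hN⟩ ^ (-a)) y‖ ^ (p₁ - 2)) •
                gradient (fun z : EuclideanSpace ℝ (Fin N) => z ⟨0, hN⟩ ^ (-a)) y)
            x (EuclideanSpace.single i 1)) i)
          = lam * (x ⟨0, hN⟩ ^ (-b)) ^ q₂ ∧
        (∑ i : Fin N,
          (fderiv ℝ (fun y : EuclideanSpace ℝ (Fin N) =>
              (‖gradient (fun z : EuclideanSpace ℝ (Fin N) => z ⟨0, hN⟩ ^ (-b)) y‖ ^ (p₂ - 2)) •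
                gradient (fun z : EuclideanSpace ℝ (Fin N) => z ⟨0, hN⟩ ^ (-b)) y)
            x (EuclideanSpace.single i 1)) i)
          = mu * (x ⟨0, hN⟩ ^ (-a)) ^ q₁ := by
  have hD : 0 < q₁ * q₂ - (p₁ - 1) * (p₂ - 1) := by nlinarith
  have ha₀ : 0 < a := ha ▸ div_pos (by nlinarith) hD
  have hb₀ : 0 < b := hb ▸ div_pos (by nlinarith) hD
  have hab : (a + 1) * (p₁ - 1) + 1 = b * q₂ := ha ▸ hb ▸ exponent_balance hD.ne'
  have hba : (b + 1) * (p₂ - 1) + 1 = a * q₁ := by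
    have hD' : q₂ * q₁ - (p₂ - 1) * (p₁ - 1) = q₁ * q₂ - (p₁ - 1) * (p₂ - 1) := by ring
    have := exponent_balance (p₁ := p₂) (p₂ := p₁) (q₁ := q₂) (q₂ := q₁) (hD' ▸ hD.ne')
    rwa [hD', ← ha, ← hb] at this
  refine ⟨a ^ (p₁ - 1) * ((a + 1) * (p₁ - 1)), by positivity,
    b ^ (p₂ - 1) * ((b + 1) * (p₂ - 1)), by positivity, fun x hx => ⟨?_, ?_⟩⟩
  · rw [← rpow_mul hx.le, neg_mul, ← hab]
    exact pLaplacian_rpow_neg_coord p₁ ha₀ _ hx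
  · rw [← rpow_mul hx.le, neg_mul, ← hba]
    exact pLaplacian_rpow_neg_coord p₂ hb₀ _ hx
end
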